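/- Define polynomials A_n(x) by A_0(x)=1 and A_{n+1}(x) = A_n'(x) + (x+1)·A_n(x). Then as formal power series, Σ_{k≥0} N(n+k;(k)) x^k = A_n(x)/(1−x), where N(n+k;(k)) = Σ_{j=0}^{min(n,k)} C(n,j)·t_{n−j}. -/

import Mathlib

open Finset

/-- `invol n` = number of involutions in the symmetric group `S_n` (permutations `σ` with `σ² = 1`). -/
noncomputable def invol (n : ℕ) : ℕ := Nat.card {σ : Equiv.Perm (Fin n) // σ * σ = 1}

/-- `skewSYT lam alp` = the number `f^{λ/α}` of standard Young tableaux of skew shape `λ/α`,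
encoded as saturated chains of Young diagrams from `α` to `λ` adding one cell at a time
(zero if `α ⊄ λ`). -/
noncomputable def skewSYT (lam alp : YoungDiagram) : ℕ :=
  Nat.card {f : Fin (lam.card - alp.card + 1) → YoungDiagram //
    f 0 = alp ∧ f (Fin.last _) = lam ∧
    ∀ i : Fin (lam.card - alp.card),
      f i.castSucc ≤ f i.succ ∧ (f i.succ).card = (f i.castSucc).card + 1}

/-- `NN n α = N(n;α) = Σ_{λ ⊢ n} f^{λ/α}`. -/
noncomputable def NN (n : ℕ) (alp : YoungDiagram) : ℕ :=
  ∑ᶠ lam ∈ {μ : YoungDiagram | μ.card = n}, skewSYT lam alp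

/-- the single-row Young diagram with `k` cells -/
def rowYD (k : ℕ) : YoungDiagram := YoungDiagram.ofRowLens [k] (List.pairwise_singleton _ k).sortedGE

/-- the polynomials `A_n`: `A_0 = 1`, `A_{n+1} = A_n' + (x+1)·A_n` -/
noncomputable def Apoly : ℕ → Polynomial ℚ
  | 0 => 1
  | n + 1 => Polynomial.derivative (Apoly n) + (Polynomial.X + 1) * Apoly n

/-!
Standard Young tableaux of shape `λ/(k)` with `|λ| = n + k` are the saturated chains of length `n`
in Young's lattice starting at the one-row diagram `(k)`. Young's lattice is `1`-differential: a
diagram has exactly one more addable than removable corner, and two distinct diagrams of the same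
size have a common upper cover (their join) iff they have a common lower cover (their meet). This
commutation `DU = UD + I` of the up and down operators gives, for the number `E n α` of chains of
length `n` from `α`, the recursion `E (n+1) α = ∑_{γ ⋖ α} E n γ + n E (n-1) α + E n α`.
Since `(k-1)` is the only lower cover of `(k)`, the series `P n = ∑ₖ E n (k) xᵏ` satisfy
`P (n+1) = (1 + x) P n + n P (n-1)` with `P 0 = 1/(1-x)`. Differentiating the recursion defining
`A n` gives `A (n+1)' = (n+1) A n`, so `A n` obeys the same three-term recurrence as `P n (1-x)`.
-/

section UpDown

variable {α M : Type*} [DecidableEq α] [AddCommMonoid M]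

theorem sum_sum_eq_sum_card_inter_smul {s W : Finset α} {t u : α → Finset α}
    (htu : ∀ b c, c ∈ t b ↔ b ∈ u c) (hW : ∀ b ∈ s, t b ⊆ W) (f : α → M) :
    ∑ b ∈ s, ∑ c ∈ t b, f c = ∑ c ∈ W, #(s ∩ u c) • f c := by
  calc ∑ b ∈ s, ∑ c ∈ t b, f c
        = ∑ b ∈ s, ∑ c ∈ W, if b ∈ u c then f c else 0 := by
        refine sum_congr rfl fun b hb => ?_
        simp_rw [← htu, ← sum_filter, filter_mem_eq_inter, inter_eq_right.mpr (hW b hb)]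
    _ = ∑ c ∈ W, #(s ∩ u c) • f c := by
        rw [sum_comm]
        simp_rw [← sum_filter, filter_mem_eq_inter, sum_const]

/-- `card_inter` is the commutation relation `DU = UD + I` of a differential poset, read off on
matrix entries. -/
theorem sum_up_sum_down {up down : α → Finset α}
    (mem_down : ∀ b c, c ∈ down b ↔ b ∈ up c)
    (card_inter : ∀ a b, #(up a ∩ up b) = #(down a ∩ down b) + if a = b then 1 else 0)
    (a : α) (f : α → M) :
    ∑ b ∈ up a, ∑ c ∈ down b, f c = ∑ c ∈ down a, ∑ b ∈ up c, f b + f a := by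
  set W := (up a).biUnion down ∪ (down a).biUnion up ∪ {a}
  have hup : ∀ b ∈ up a, down b ⊆ W := fun b hb c hc =>
    mem_union_left _ (mem_union_left _ (mem_biUnion.mpr ⟨b, hb, hc⟩))
  have hdown : ∀ c ∈ down a, up c ⊆ W := fun c hc b hb =>
    mem_union_left _ (mem_union_right _ (mem_biUnion.mpr ⟨c, hc, hb⟩))
  rw [sum_sum_eq_sum_card_inter_smul mem_down hup,
    sum_sum_eq_sum_card_inter_smul (fun c b => (mem_down b c).symm) hdown]
  simp_rw [card_inter, add_smul, sum_add_distrib, ite_smul, one_smul, zero_smul,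
    eq_comm (a := a), sum_ite_eq', if_pos (show a ∈ W by simp [W])]

theorem count_succ_eq_sum_down_add {up down : α → Finset α}
    (mem_down : ∀ b c, c ∈ down b ↔ b ∈ up c)
    (card_inter : ∀ a b, #(up a ∩ up b) = #(down a ∩ down b) + if a = b then 1 else 0)
    {E : ℕ → α → ℕ} (hE_zero : ∀ a, E 0 a = 1)
    (hE_succ : ∀ n a, E (n + 1) a = ∑ b ∈ up a, E n b) (n : ℕ) (a : α) :
    E (n + 1) a = ∑ c ∈ down a, E n c + n * E (n - 1) a + E n a := by
  induction n generalizing a with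
  | zero =>
    have hcard : #(up a) = #(down a) + 1 := by simpa using card_inter a a
    simp [hE_succ, hE_zero, hcard]
  | succ n ih =>
    have hmid : n * ∑ b ∈ up a, E (n - 1) b = n * E n a := by
      cases n with
      | zero => simp
      | succ n => rw [← hE_succ, Nat.add_sub_cancel]
    rw [hE_succ, sum_congr rfl fun b _ => ih b, sum_add_distrib, sum_add_distrib,
      sum_up_sum_down mem_down card_inter, ← mul_sum, hmid, Nat.add_sub_cancel]
    simp_rw [← hE_succ]
    ring

end UpDown

section RankedLattice

variable {α : Type*} [Lattice α] {r : α → ℕ}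

theorem eq_sup_of_rank_eq_add_one (hr : StrictMono r) {a b c : α} (hab : a ≠ b) (hac : a ≤ c)
    (hbc : b ≤ c) (ha : r c = r a + 1) (hb : r c = r b + 1) : c = a ⊔ b := by
  refine ((sup_le hac hbc).eq_or_lt.resolve_right fun hlt => ?_).symm
  have hsup : r (a ⊔ b) ≤ r a := by have := hr hlt; omega
  rcases (le_sup_left : a ≤ a ⊔ b).eq_or_lt with heq | hlt'
  · have hba : b < a := lt_of_le_of_ne (heq ▸ le_sup_right) (Ne.symm hab)
    have := hr hba; omega
  · have := hr hlt'; omega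

theorem eq_inf_of_rank_eq_add_one (hr : StrictMono r) {a b c : α} (hab : a ≠ b) (hca : c ≤ a)
    (hcb : c ≤ b) (ha : r a = r c + 1) (hb : r b = r c + 1) : c = a ⊓ b := by
  refine (le_inf hca hcb).eq_or_lt.resolve_right fun hlt => ?_
  have hinf : r a ≤ r (a ⊓ b) := by have := hr hlt; omega
  rcases (inf_le_left : a ⊓ b ≤ a).eq_or_lt with heq | hlt'
  · have hab' : a < b := lt_of_le_of_ne (heq ▸ inf_le_right) hab
    have := hr hab'; omega
  · have := hr hlt'; omega

end RankedLattice

namespace YoungDiagram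

instance : DecidableEq YoungDiagram := fun _ _ => decidable_of_iff _ YoungDiagram.ext_iff.symm

theorem strictMono_card : StrictMono YoungDiagram.card := fun _ _ h =>
  Finset.card_lt_card (cells_ssubset_iff.mpr h)

theorem card_sup_add_card_inf (μ ν : YoungDiagram) :
    (μ ⊔ ν).card + (μ ⊓ ν).card = μ.card + ν.card := by
  simp only [YoungDiagram.card, cells_sup, cells_inf, card_union_add_card_inter]

theorem lt_card_of_mem {μ : YoungDiagram} {c : ℕ × ℕ} (hc : c ∈ μ) :
    c.1 < μ.card ∧ c.2 < μ.card := by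
  constructor
  · calc c.1 < μ.colLen c.2 := mem_iff_lt_colLen.mp hc
      _ = #(μ.col c.2) := μ.colLen_eq_card
      _ ≤ μ.card := card_filter_le _ _
  · calc c.2 < μ.rowLen c.1 := mem_iff_lt_rowLen.mp hc
      _ = #(μ.row c.1) := μ.rowLen_eq_card
      _ ≤ μ.card := card_filter_le _ _

theorem finite_setOf_card (m : ℕ) : {μ : YoungDiagram | μ.card = m}.Finite := by
  refine Set.Finite.of_finite_image (f := cells) ?_ fun μ _ ν _ h => YoungDiagram.ext h
  refine (((range m ×ˢ range m).powerset : Set (Finset (ℕ × ℕ))).toFinite).subset ?_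
  rintro _ ⟨μ, rfl, rfl⟩
  rw [mem_coe, mem_powerset]
  intro c hc
  simpa using lt_card_of_mem hc

open Classical in
noncomputable def upperCovers (μ : YoungDiagram) : Finset YoungDiagram :=
  (finite_setOf_card (μ.card + 1)).toFinset.filter (μ ≤ ·)

theorem mem_upperCovers {μ ν : YoungDiagram} :
    ν ∈ μ.upperCovers ↔ μ ≤ ν ∧ ν.card = μ.card + 1 := by
  simp [upperCovers, and_comm]

open Classical in
noncomputable def lowerCovers (μ : YoungDiagram) : Finset YoungDiagram :=
  (finite_setOf_card (μ.card - 1)).toFinset.filter (μ ∈ upperCovers ·)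

theorem mem_lowerCovers {μ ν : YoungDiagram} :
    ν ∈ μ.lowerCovers ↔ μ ∈ ν.upperCovers := by
  simp only [lowerCovers, mem_filter, Set.Finite.mem_toFinset, Set.mem_ofPred_eq,
    mem_upperCovers]
  exact ⟨And.right, fun h => ⟨by omega, h⟩⟩

theorem upperCovers_inter_upperCovers {μ ν : YoungDiagram} (hne : μ ≠ ν) :
    μ.upperCovers ∩ ν.upperCovers =
      ({μ ⊔ ν} : Finset YoungDiagram).filter fun σ ↦
        σ.card = μ.card + 1 ∧ σ.card = ν.card + 1 := by
  ext σ
  simp only [mem_inter, mem_upperCovers, mem_filter, mem_singleton]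
  constructor
  · rintro ⟨⟨hμ, h₁⟩, hν, h₂⟩
    exact ⟨eq_sup_of_rank_eq_add_one strictMono_card hne hμ hν h₁ h₂, h₁, h₂⟩
  · rintro ⟨rfl, h₁, h₂⟩
    exact ⟨⟨le_sup_left, h₁⟩, le_sup_right, h₂⟩

theorem lowerCovers_inter_lowerCovers {μ ν : YoungDiagram} (hne : μ ≠ ν) :
    μ.lowerCovers ∩ ν.lowerCovers =
      ({μ ⊓ ν} : Finset YoungDiagram).filter fun σ ↦
        μ.card = σ.card + 1 ∧ ν.card = σ.card + 1 := by
  ext σ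
  simp only [mem_inter, mem_lowerCovers, mem_upperCovers, mem_filter, mem_singleton]
  constructor
  · rintro ⟨⟨hμ, h₁⟩, hν, h₂⟩
    exact ⟨eq_inf_of_rank_eq_add_one strictMono_card hne hμ hν h₁ h₂, h₁, h₂⟩
  · rintro ⟨rfl, h₁, h₂⟩
    exact ⟨⟨inf_le_left, h₁⟩, inf_le_right, h₂⟩

theorem card_upperCovers_inter_of_ne {μ ν : YoungDiagram} (hne : μ ≠ ν) :
    #(μ.upperCovers ∩ ν.upperCovers) = #(μ.lowerCovers ∩ ν.lowerCovers) := by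
  rw [upperCovers_inter_upperCovers hne, lowerCovers_inter_lowerCovers hne, filter_singleton,
    filter_singleton]
  have := card_sup_add_card_inf μ ν
  by_cases h : (μ ⊔ ν).card = μ.card + 1 ∧ (μ ⊔ ν).card = ν.card + 1
  · rw [if_pos h, if_pos (by omega), card_singleton, card_singleton]
  · rw [if_neg h, if_neg (by omega)]

variable {μ : YoungDiagram} {i : ℕ}

def removableRows (μ : YoungDiagram) : Finset ℕ :=
  (range (μ.colLen 0)).filter fun i => μ.rowLen (i + 1) < μ.rowLen i

/-- A cell can be added at the end of row `i + 1` exactly when one can be removed from the end of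
row `i`, and one can always be added to row `0`. -/
def addableRows (μ : YoungDiagram) : Finset ℕ :=
  insert 0 ((removableRows μ).image (· + 1))

theorem mem_removableRows : i ∈ μ.removableRows ↔ μ.rowLen (i + 1) < μ.rowLen i := by
  refine ⟨fun h => (mem_filter.mp h).2, fun h => mem_filter.mpr ⟨?_, h⟩⟩
  rw [mem_range, ← mem_iff_lt_colLen, mem_iff_lt_rowLen]
  omega

theorem mem_addableRows : i ∈ μ.addableRows ↔ ∀ j < i, μ.rowLen i < μ.rowLen j := by
  simp only [addableRows, mem_insert, mem_image, mem_removableRows]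
  constructor
  · rintro (rfl | ⟨r, hr, rfl⟩) j hj
    · omega
    · exact hr.trans_le (μ.rowLen_anti j r (by omega))
  · intro h
    cases i with
    | zero => exact Or.inl rfl
    | succ r => exact Or.inr ⟨r, h r r.lt_succ_self, rfl⟩

theorem card_addableRows (μ : YoungDiagram) : #μ.addableRows = #μ.removableRows + 1 := by
  rw [addableRows, card_insert_of_notMem (by simp),
    card_image_of_injective _ (add_left_injective 1)]

def addCell (μ : YoungDiagram) (i : ℕ) (h : ∀ j < i, μ.rowLen i < μ.rowLen j) :
    YoungDiagram where
  cells := insert (i, μ.rowLen i) μ.cells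
  isLowerSet := by
    rintro ⟨a, b⟩ ⟨c, d⟩ ⟨hca, hdb⟩ hab
    simp only [coe_insert, Set.mem_insert_iff, mem_coe, mem_cells, Prod.mk.injEq,
      mem_iff_lt_rowLen] at hab hca hdb ⊢
    rcases hab with ⟨rfl, rfl⟩ | hab
    · rcases hca.eq_or_lt with rfl | hlt
      · omega
      · exact Or.inr (hdb.trans_lt (h c hlt))
    · exact Or.inr (hdb.trans_lt (hab.trans_le (μ.rowLen_anti c a hca)))

def removeCell (μ : YoungDiagram) (i : ℕ) (h : μ.rowLen (i + 1) < μ.rowLen i) :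
    YoungDiagram where
  cells := μ.cells.erase (i, μ.rowLen i - 1)
  isLowerSet := by
    rintro ⟨a, b⟩ ⟨c, d⟩ ⟨hca, hdb⟩ hab
    simp only [coe_erase, Set.mem_sdiff, mem_coe, mem_cells, Set.mem_singleton_iff,
      Prod.mk.injEq, mem_iff_lt_rowLen] at hab hca hdb ⊢
    refine ⟨hdb.trans_lt (hab.1.trans_le (μ.rowLen_anti c a hca)), ?_⟩
    rintro ⟨rfl, rfl⟩
    have := μ.rowLen_anti c a hca
    rcases hca.eq_or_lt with rfl | hlt
    · omega
    · have := μ.rowLen_anti (c + 1) a hlt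
      omega

theorem mem_addCell {h} {c : ℕ × ℕ} :
    c ∈ μ.addCell i h ↔ c = (i, μ.rowLen i) ∨ c ∈ μ :=
  mem_insert

theorem mem_removeCell {h} {c : ℕ × ℕ} :
    c ∈ μ.removeCell i h ↔ c ≠ (i, μ.rowLen i - 1) ∧ c ∈ μ :=
  mem_erase

theorem addCell_mem_upperCovers (h) : μ.addCell i h ∈ μ.upperCovers :=
  mem_upperCovers.mpr ⟨fun _ => mem_addCell.mpr ∘ Or.inr,
    card_insert_of_notMem (by simp [mem_iff_lt_rowLen])⟩

theorem removeCell_mem_lowerCovers (h) : μ.removeCell i h ∈ μ.lowerCovers := by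
  refine mem_lowerCovers.mpr (mem_upperCovers.mpr ⟨fun _ hc => (mem_removeCell.mp hc).2, ?_⟩)
  rw [YoungDiagram.card, removeCell, card_erase_add_one (by simp [mem_iff_lt_rowLen]; omega)]

theorem card_upperCovers_eq_card_addableRows (μ : YoungDiagram) :
    #μ.upperCovers = #μ.addableRows := by
  refine (card_bij (fun i hi => μ.addCell i (mem_addableRows.mp hi))
    (fun i _ => addCell_mem_upperCovers _) (fun i _ j _ hij => ?_) (fun ν hν => ?_)).symm
  · have : (i, μ.rowLen i) ∈ μ.addCell j _ := hij ▸ mem_addCell.mpr (Or.inl rfl)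
    rcases mem_addCell.mp this with h | h
    · exact congrArg Prod.fst h
    · exact absurd (mem_iff_lt_rowLen.mp h) (lt_irrefl _)
  · obtain ⟨hle, hcard⟩ := mem_upperCovers.mp hν
    obtain ⟨⟨a, b⟩, hc, hins⟩ :=
      exists_eq_insert_iff.mpr ⟨cells_subset_iff.mpr hle, hcard.symm⟩
    have below (d : ℕ × ℕ) (hd : d ≤ (a, b)) (hne : d ≠ (a, b)) : d ∈ μ := by
      have : d ∈ insert (a, b) μ.cells :=
        hins ▸ ν.isLowerSet hd (hins ▸ mem_insert_self _ _)
      exact (mem_insert.mp this).resolve_left hne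
    rw [mem_cells, mem_iff_lt_rowLen, not_lt] at hc
    have hb : b = μ.rowLen a := by
      by_contra hne
      have := below (a, μ.rowLen a) ⟨le_rfl, hc⟩ (by simp; omega)
      simp [mem_iff_lt_rowLen] at this
    subst hb
    refine ⟨a, mem_addableRows.mpr fun j hj => ?_, YoungDiagram.ext hins⟩
    exact mem_iff_lt_rowLen.mp (below (j, μ.rowLen a) ⟨hj.le, le_rfl⟩ (by simp; omega))

theorem card_lowerCovers_eq_card_removableRows (μ : YoungDiagram) :
    #μ.lowerCovers = #μ.removableRows := by
  refine (card_bij (fun i hi => μ.removeCell i (mem_removableRows.mp hi))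
    (fun i _ => removeCell_mem_lowerCovers _) (fun i hi j _ hij => ?_) (fun γ hγ => ?_)).symm
  · have hmem : (i, μ.rowLen i - 1) ∈ μ :=
      mem_iff_lt_rowLen.mpr (by have := mem_removableRows.mp hi; omega)
    have : (i, μ.rowLen i - 1) ∉ μ.removeCell j _ :=
      hij ▸ fun h => (mem_removeCell.mp h).1 rfl
    by_contra hne
    exact this (mem_removeCell.mpr ⟨by simp [hne], hmem⟩)
  · obtain ⟨hle, hcard⟩ := mem_upperCovers.mp (mem_lowerCovers.mp hγ)
    obtain ⟨⟨a, b⟩, hc, hins⟩ :=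
      exists_eq_insert_iff.mpr ⟨cells_subset_iff.mpr hle, hcard.symm⟩
    have above (d : ℕ × ℕ) (hd : d ∈ μ) (hcd : (a, b) ≤ d) : d = (a, b) := by
      by_contra hne
      have : d ∈ insert (a, b) γ.cells := hins ▸ hd
      have : d ∈ γ := (mem_insert.mp this).resolve_left hne
      exact hc (γ.isLowerSet hcd this)
    have hab : (a, b) ∈ μ.cells := hins ▸ mem_insert_self _ _
    rw [mem_cells, mem_iff_lt_rowLen] at hab
    have hb : b = μ.rowLen a - 1 := by
      by_contra hne
      simpa using above (a, b + 1) (mem_iff_lt_rowLen.mpr (by omega)) ⟨le_rfl, by simp⟩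
    have hrem : μ.rowLen (a + 1) < μ.rowLen a := by
      by_contra hge
      simpa using above (a + 1, b) (mem_iff_lt_rowLen.mpr (by omega)) ⟨by simp, le_rfl⟩
    subst hb
    refine ⟨a, mem_removableRows.mpr hrem, YoungDiagram.ext ?_⟩
    change μ.cells.erase _ = γ.cells
    rw [← hins, erase_insert hc]

theorem card_upperCovers (μ : YoungDiagram) : #μ.upperCovers = #μ.lowerCovers + 1 := by
  rw [card_upperCovers_eq_card_addableRows, card_lowerCovers_eq_card_removableRows,
    card_addableRows]

theorem card_upperCovers_inter (μ ν : YoungDiagram) :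
    #(μ.upperCovers ∩ ν.upperCovers) =
      #(μ.lowerCovers ∩ ν.lowerCovers) + if μ = ν then 1 else 0 := by
  rcases eq_or_ne μ ν with rfl | hne
  · simp [card_upperCovers]
  · simp [card_upperCovers_inter_of_ne hne, hne]

end YoungDiagram

open YoungDiagram

theorem cells_rowYD (k : ℕ) : (rowYD k).cells = {0} ×ˢ range k := by
  ext ⟨i, j⟩
  simp only [rowYD, mem_cells, mem_ofRowLens, List.length_singleton, mem_product, mem_singleton,
    mem_range]
  constructor
  · rintro ⟨hi, hj⟩
    obtain rfl : i = 0 := by omega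
    exact ⟨rfl, by simpa using hj⟩
  · rintro ⟨rfl, hj⟩
    exact ⟨Nat.one_pos, by simpa using hj⟩

theorem card_rowYD (k : ℕ) : (rowYD k).card = k := by
  simp [YoungDiagram.card, cells_rowYD]

theorem eq_rowYD_of_le_rowYD {ν : YoungDiagram} {k : ℕ} (h : ν ≤ rowYD k) :
    ν = rowYD (ν.rowLen 0) := by
  refine YoungDiagram.ext ?_
  rw [cells_rowYD, ← row_eq_prod, row, eq_comm, filter_eq_self]
  intro c hc
  have := h hc
  rw [← mem_cells, cells_rowYD, mem_product, mem_singleton] at this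
  exact this.1

theorem lowerCovers_rowYD_zero : (rowYD 0).lowerCovers = ∅ := by
  ext γ
  simp [mem_lowerCovers, mem_upperCovers, card_rowYD]

theorem lowerCovers_rowYD_succ (k : ℕ) : (rowYD (k + 1)).lowerCovers = {rowYD k} := by
  ext γ
  rw [mem_lowerCovers, mem_upperCovers, mem_singleton, card_rowYD]
  constructor
  · rintro ⟨hle, hcard⟩
    have hγ := eq_rowYD_of_le_rowYD hle
    rw [hγ, card_rowYD] at hcard
    rw [hγ, show γ.rowLen 0 = k by omega]
  · rintro rfl
    refine ⟨?_, by rw [card_rowYD]⟩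
    rw [← cells_subset_iff, cells_rowYD, cells_rowYD]
    exact product_subset_product_right (range_subset_range.mpr k.le_succ)

def IsSaturatedChain {n : ℕ} (f : Fin (n + 1) → YoungDiagram) : Prop :=
  ∀ i : Fin n, f i.castSucc ≤ f i.succ ∧ (f i.succ).card = (f i.castSucc).card + 1

theorem IsSaturatedChain.cons {n : ℕ} {α : YoungDiagram} {g : Fin (n + 1) → YoungDiagram}
    (hα : g 0 ∈ α.upperCovers) (hg : IsSaturatedChain g) :
    IsSaturatedChain (Fin.cons α g : Fin (n + 2) → YoungDiagram) := by
  refine Fin.cases ?_ fun i => ?_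
  · simpa using mem_upperCovers.mp hα
  · simpa [← Fin.succ_castSucc] using hg i

theorem IsSaturatedChain.card_apply {n : ℕ} {f : Fin (n + 1) → YoungDiagram}
    (hf : IsSaturatedChain f) (i : Fin (n + 1)) : (f i).card = (f 0).card + i := by
  induction i using Fin.induction with
  | zero => simp
  | succ i ih => rw [(hf i).2, ih, Fin.val_succ, Fin.val_castSucc, add_assoc]

def SaturatedChainFrom (n : ℕ) (α : YoungDiagram) : Type :=
  {f : Fin (n + 1) → YoungDiagram // f 0 = α ∧ IsSaturatedChain f}

def saturatedChainFromSuccEquiv (n : ℕ) (α : YoungDiagram) :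
    SaturatedChainFrom (n + 1) α ≃ Σ β : α.upperCovers, SaturatedChainFrom n β where
  toFun f := ⟨⟨f.1 1, mem_upperCovers.mpr (by simpa [f.2.1] using f.2.2 0)⟩,
    ⟨Fin.tail f.1, rfl, fun i => f.2.2 i.succ⟩⟩
  invFun p := ⟨Fin.cons α p.2.1, rfl, .cons (p.2.2.1.symm ▸ p.1.2) p.2.2.2⟩
  left_inv f := Subtype.ext (by simp [← f.2.1])
  right_inv := fun ⟨_, _, hg₀, _⟩ => Sigma.subtype_ext (Subtype.ext hg₀) rfl

instance (α : YoungDiagram) : Subsingleton (SaturatedChainFrom 0 α) :=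
  ⟨fun f g => Subtype.ext <| funext fun i => by rw [Fin.eq_zero i, f.2.1, g.2.1]⟩

instance finite_saturatedChainFrom : ∀ n α, Finite (SaturatedChainFrom n α)
  | 0, _ => Finite.of_subsingleton
  | n + 1, α =>
    have := finite_saturatedChainFrom n
    Finite.of_equiv _ (saturatedChainFromSuccEquiv n α).symm

noncomputable def chainCount (n : ℕ) (α : YoungDiagram) : ℕ :=
  Nat.card (SaturatedChainFrom n α)

theorem chainCount_zero (α : YoungDiagram) : chainCount 0 α = 1 :=
  Nat.card_eq_one_iff_unique.mpr ⟨inferInstance, ⟨⟨fun _ => α, rfl, finZeroElim⟩⟩⟩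

theorem chainCount_succ (n : ℕ) (α : YoungDiagram) :
    chainCount (n + 1) α = ∑ β ∈ α.upperCovers, chainCount n β := by
  rw [chainCount, Nat.card_congr (saturatedChainFromSuccEquiv n α), Nat.card_sigma]
  exact sum_coe_sort α.upperCovers (chainCount n)

theorem chainCount_succ_eq (n : ℕ) (α : YoungDiagram) :
    chainCount (n + 1) α =
      ∑ γ ∈ α.lowerCovers, chainCount n γ + n * chainCount (n - 1) α + chainCount n α :=
  count_succ_eq_sum_down_add (fun _ _ => mem_lowerCovers) card_upperCovers_inter chainCount_zero
    chainCount_succ n α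

theorem skewSYT_eq_card {ν α : YoungDiagram} {n : ℕ} (h : ν.card = n + α.card) :
    skewSYT ν α = Nat.card {f : SaturatedChainFrom n α // f.1 (Fin.last n) = ν} := by
  obtain rfl : n = ν.card - α.card := by omega
  exact Nat.card_congr ⟨fun f => ⟨⟨f.1, f.2.1, f.2.2.2⟩, f.2.2.1⟩,
    fun f => ⟨f.1.1, f.1.2.1, f.2, f.1.2.2⟩, fun _ => rfl, fun _ => rfl⟩

theorem NN_add_card (n : ℕ) (α : YoungDiagram) : NN (n + α.card) α = chainCount n α := by
  have hfin := finite_setOf_card (n + α.card)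
  set T := hfin.toFinset
  have hT (f : SaturatedChainFrom n α) : f.1 (Fin.last n) ∈ T := by
    simp [T, f.2.2.card_apply, f.2.1, add_comm]
  let byEnd : SaturatedChainFrom n α ≃
      Σ ν : T, {f : SaturatedChainFrom n α // f.1 (Fin.last n) = ν} :=
    { toFun f := ⟨⟨_, hT f⟩, f, rfl⟩
      invFun p := p.2.1
      left_inv _ := rfl
      right_inv := fun ⟨_, _, hf⟩ => Sigma.subtype_ext (Subtype.ext hf) rfl }
  rw [NN, finsum_mem_eq_finite_toFinset_sum _ hfin, chainCount, Nat.card_congr byEnd,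
    Nat.card_sigma, ← sum_coe_sort T]
  exact Fintype.sum_congr _ _ fun ν => skewSYT_eq_card (hfin.mem_toFinset.mp ν.2)

theorem eq_of_recurrence {R : Type*} [Semiring R] {u v : ℕ → R} (a : R) (h₀ : u 0 = v 0)
    (hu : ∀ n, u (n + 1) = a * u n + n * u (n - 1))
    (hv : ∀ n, v (n + 1) = a * v n + n * v (n - 1)) : u = v := by
  funext n
  induction n using Nat.strong_induction_on with
  | _ n ih =>
    cases n with
    | zero => exact h₀
    | succ n => rw [hu, hv, ih n n.lt_succ_self, ih (n - 1) (by omega)]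

theorem derivative_Apoly_succ (n : ℕ) :
    Polynomial.derivative (Apoly (n + 1)) = (n + 1) * Apoly n := by
  induction n with
  | zero => simp [Apoly]
  | succ n ih =>
    rw [Apoly, map_add, ih, Polynomial.derivative_mul, Polynomial.derivative_mul, ih]
    simp only [Apoly, Polynomial.derivative_add, Polynomial.derivative_X,
      Polynomial.derivative_one, Polynomial.derivative_natCast]
    push_cast
    ring

theorem Apoly_succ (n : ℕ) :
    Apoly (n + 1) = (Polynomial.X + 1) * Apoly n + (n : Polynomial ℚ) * Apoly (n - 1) := by
  cases n with
  | zero => simp [Apoly]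
  | succ n =>
    rw [Apoly, derivative_Apoly_succ, Nat.add_sub_cancel]
    push_cast
    ring

open PowerSeries

theorem PowerSeries.coeff_natCast_mul {R : Type*} [Semiring R] (n k : ℕ) (f : PowerSeries R) :
    coeff k ((n : PowerSeries R) * f) = n * coeff k f := by
  rw [← map_natCast (C (R := R)), coeff_C_mul]

noncomputable def rowChainSeries (n : ℕ) : PowerSeries ℚ :=
  mk fun k => (chainCount n (rowYD k) : ℚ)

theorem rowChainSeries_zero : rowChainSeries 0 = PowerSeries.mk 1 := by
  ext k
  simp [rowChainSeries, chainCount_zero]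

theorem rowChainSeries_succ (n : ℕ) :
    rowChainSeries (n + 1) =
      (X + 1) * rowChainSeries n + (n : PowerSeries ℚ) * rowChainSeries (n - 1) := by
  ext (_ | k)
  · simp [rowChainSeries, chainCount_succ_eq, lowerCovers_rowYD_zero]
    ring
  · simp [rowChainSeries, chainCount_succ_eq, lowerCovers_rowYD_succ, add_mul, coeff_succ_X_mul,
      coeff_natCast_mul]
    ring

theorem coe_Apoly_succ (n : ℕ) :
    (Apoly (n + 1) : PowerSeries ℚ) =
      (X + 1) * (Apoly n : PowerSeries ℚ) +
        (n : PowerSeries ℚ) * (Apoly (n - 1) : PowerSeries ℚ) := by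
  simp only [Apoly_succ, ← Polynomial.coeToPowerSeries.ringHom_apply, map_add, map_mul,
    map_natCast, map_one]
  simp [Polynomial.coeToPowerSeries.ringHom_apply]

/-- `Σ_{k≥0} N(n+k;(k)) x^k = A_n(x)/(1−x)` as formal power series, where `A_0 = 1` and
`A_{n+1} = A_n' + (x+1)A_n`. -/
theorem stmt11 (n : ℕ) :
    (PowerSeries.mk fun k => (NN (n + k) (rowYD k) : ℚ)) * (1 - PowerSeries.X)
      = (Apoly n : PowerSeries ℚ) := by
  have hseries : (PowerSeries.mk fun k => (NN (n + k) (rowYD k) : ℚ)) = rowChainSeries n := by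
    ext k
    rw [rowChainSeries, coeff_mk, coeff_mk, ← NN_add_card, card_rowYD]
  have hrec : (fun n => rowChainSeries n * (1 - X)) = fun n => (Apoly n : PowerSeries ℚ) := by
    refine eq_of_recurrence (X + 1) ?_ (fun n => ?_) coe_Apoly_succ
    · simp [rowChainSeries_zero, mk_one_mul_one_sub_eq_one, Apoly]
    · simp only [rowChainSeries_succ]
      ring
  rw [hseries]
  exact congrFun hrec n
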